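/- Let (X,T) be a weakly mixing dynamical system with the shadowing property. For every ε > 0 there exists M > 0 such that for any k ≥ 2, points x_1,…,x_k ∈ X, integers 0 ≤ a_1 ≤ b_1 < a_2 ≤ b_2 < … < a_k ≤ b_k with a_i − b_{i−1} ≥ M, and any p ≥ M + b_k − a_1, there exists z ∈ X whose orbit closure is an odometer and which satisfies d(T^j(z), T^{np+j}(z)) < ε for all n, j ≥ 0 and d(T^{np+j}(z), T^j(x_i)) < ε for all a_i ≤ j ≤ b_i, 1 ≤ i ≤ k, n ≥ 0. -/

import Mathlib

/-!
Weak mixing of `T × T` yields `δ`-chains of every length `≥ M` between any two points. Gluing the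
prescribed orbit segments with such chains, and the last segment back to the first, gives a
`p`-periodic `δ`-pseudo-orbit, which is shadowed by some point.

By compactness, a point shadowing a `q`-periodic sequence returns close to itself after some
multiple `q'` of `q`, so its own orbit wraps into a `q'`-periodic pseudo-orbit at any finer scale,
still close to the old sequence; shadowing that one gives a better point. Iterating with scales
`t / 2 ^ m` produces periodic sequences converging uniformly, so the limit point has a
limit-periodic orbit: for every `r > 0` there is a period `q` such that `T^[n * q]` moves every
point of the orbit closure by at most `r`. Hence the iterates are equicontinuous on the orbit
closure and the point is regularly recurrent, i.e. the orbit closure is an odometer.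
-/

open Filter

/-- `(X,T)` has the shadowing property. -/
def ShadowingProperty {X : Type*} [MetricSpace X] (T : X → X) : Prop :=
  ∀ ε > (0 : ℝ), ∃ δ > (0 : ℝ), ∀ x : ℕ → X,
    (∀ k, dist (T (x k)) (x (k + 1)) < δ) → ∃ y : X, ∀ k, dist (T^[k] y) (x k) < ε

/-- Topological transitivity. -/
def TopTransitive {Y : Type*} [TopologicalSpace Y] (S : Y → Y) : Prop :=
  ∀ U V : Set Y, IsOpen U → IsOpen V → U.Nonempty → V.Nonempty →
    ∃ n : ℕ, 0 < n ∧ (S^[n] '' U ∩ V).Nonempty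

/-- `z` is regularly recurrent. -/
def RegularlyRecurrent {X : Type*} [TopologicalSpace X] (T : X → X) (z : X) : Prop :=
  ∀ U ∈ nhds z, ∃ k : ℕ, 0 < k ∧ ∀ n : ℕ, T^[k * n] z ∈ U

/-- A dynamical system is an odometer if it is equicontinuous and has a
regularly recurrent point with dense orbit. -/
def IsOdometer {Y : Type*} [MetricSpace Y] (S : Y → Y) : Prop :=
  Equicontinuous (fun n : ℕ => S^[n]) ∧
    ∃ z : Y, RegularlyRecurrent S z ∧ Dense (Set.range fun n => S^[n] z)

/-- The orbit closure of `z`. -/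
def orbitClosure {X : Type*} [TopologicalSpace X] (T : X → X) (z : X) : Set X :=
  closure (Set.range fun n => T^[n] z)

open Function Topology

section Periodize

variable {α : Type*}

/-- The `p`-periodic sequence that agrees with `w` on `[s, s + p)`. -/
def periodize (w : ℕ → α) (s p : ℕ) (j : ℕ) : α :=
  w (s + (j + (p - 1) * s) % p)

theorem periodize_periodic (w : ℕ → α) (s p : ℕ) : Periodic (periodize w s p) p := fun j => by
  simp only [periodize, Nat.add_right_comm j p, Nat.add_mod_right]

theorem periodize_of_le_of_lt {w : ℕ → α} {s p j : ℕ} (hs : s ≤ j) (hj : j < s + p) :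
    periodize w s p j = w j := by
  obtain ⟨q, rfl⟩ : ∃ q, p = q + 1 := ⟨p - 1, by omega⟩
  have : j + (q + 1 - 1) * s = (j - s) + s * (q + 1) := by
    rw [Nat.add_sub_cancel]; ring_nf; omega
  rw [periodize, this, Nat.add_mul_mod_self_right, Nat.mod_eq_of_lt (by omega),
    Nat.add_sub_cancel' hs]

theorem periodize_eq_self {f : ℕ → α} {q s p : ℕ} (hf : Periodic f q) (hs : q ∣ s)
    (hp : q ∣ p) : periodize f s p = f := by
  funext j
  obtain ⟨s, rfl⟩ := hs
  have hmod : ((j + (p - 1) * (q * s)) % p) % q = j % q := by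
    rw [Nat.mod_mod_of_dvd _ hp, show (p - 1) * (q * s) = (p - 1) * s * q by ring,
      Nat.add_mul_mod_self_right]
  rw [periodize, ← hf.map_mod_nat, ← hf.map_mod_nat j, ← hmod, Nat.mul_comm q s,
    Nat.mul_add_mod_self_right]

end Periodize

section PseudoOrbits

variable {X : Type*} [MetricSpace X]

def IsPseudoOrbit (T : X → X) (δ : ℝ) (ξ : ℕ → X) : Prop :=
  ∀ j, dist (T (ξ j)) (ξ (j + 1)) < δ

def IsPseudoOrbitOn (T : X → X) (δ : ℝ) (w : ℕ → X) (s e : ℕ) : Prop :=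
  ∀ j, s ≤ j → j < e → dist (T (w j)) (w (j + 1)) < δ

def Chain (T : X → X) (δ : ℝ) (n : ℕ) (x y : X) : Prop :=
  ∃ c : ℕ → X, c 0 = x ∧ c n = y ∧ IsPseudoOrbitOn T δ c 0 n

def IsLimitPeriodic (u : ℕ → X) : Prop :=
  ∀ r > 0, ∃ ξ : ℕ → X, ∃ q > 0, Periodic ξ q ∧ ∀ j, dist (u j) (ξ j) ≤ r

variable {T : X → X} {δ : ℝ}

theorem IsPseudoOrbitOn.mono {δ' : ℝ} {w : ℕ → X} {s e s' e' : ℕ}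
    (h : IsPseudoOrbitOn T δ w s e) (hδ : δ ≤ δ') (hs : s ≤ s') (he : e' ≤ e) :
    IsPseudoOrbitOn T δ' w s' e' :=
  fun j hj hj' => (h j (hs.trans hj) (hj'.trans_le he)).trans_le hδ

theorem isPseudoOrbitOn_orbit (hδ : 0 < δ) (x : X) (s e : ℕ) :
    IsPseudoOrbitOn T δ (fun j => T^[j] x) s e := fun j _ _ => by
  dsimp only
  rwa [iterate_succ_apply', dist_self]

theorem IsPseudoOrbitOn.splice {u v c : ℕ → X} {s B A e : ℕ} (hBA : B ≤ A)
    (hu : IsPseudoOrbitOn T δ u s B) (hc : IsPseudoOrbitOn T δ c 0 (A - B))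
    (hc₀ : c 0 = u B) (hcA : c (A - B) = v A) (hv : IsPseudoOrbitOn T δ v A e) :
    ∃ w, IsPseudoOrbitOn T δ w s e ∧ (∀ j ≤ B, w j = u j) ∧ ∀ j, A ≤ j → w j = v j := by
  let w : ℕ → X := fun j => if j ≤ B then u j else if j < A then c (j - B) else v j
  have hwc : ∀ j, B ≤ j → j ≤ A → w j = c (j - B) := by
    intro j hBj hjA
    by_cases hjB : j ≤ B
    · obtain rfl : j = B := le_antisymm hjB hBj
      simp [w, hc₀]
    · by_cases hjA' : j < A
      · simp [w, hjB, hjA']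
      · obtain rfl : j = A := by omega
        simp [w, hjB, hcA]
  have hwv : ∀ j, A ≤ j → w j = v j := by
    intro j hAj
    by_cases hjA : j = A
    · subst hjA
      rw [hwc j hBA le_rfl, hcA]
    · simp [w, show ¬ j ≤ B by omega, show ¬ j < A by omega]
  refine ⟨w, fun j hsj hje => ?_, fun j hj => if_pos hj, hwv⟩
  rcases lt_or_ge j B with hjB | hBj
  · simp only [w, if_pos hjB.le, if_pos (Nat.succ_le_of_lt hjB)]
    exact hu j hsj hjB
  rcases lt_or_ge j A with hjA | hAj
  · rw [hwc j hBj hjA.le, hwc (j + 1) (by omega) hjA, show j + 1 - B = j - B + 1 by omega]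
    exact hc _ (Nat.zero_le _) (by omega)
  · rw [hwv j hAj, hwv (j + 1) (by omega)]
    exact hv j hAj hje

theorem isPseudoOrbit_periodize {w : ℕ → X} {s p : ℕ} (hp : 0 < p)
    (hw : IsPseudoOrbitOn T δ w s (s + p - 1)) (hclose : dist (T (w (s + p - 1))) (w s) < δ) :
    IsPseudoOrbit T δ (periodize w s p) := by
  intro j
  have hnext : (j + 1 + (p - 1) * s) % p = ((j + (p - 1) * s) % p + 1) % p := by
    rw [Nat.mod_add_mod, Nat.add_right_comm]
  simp only [periodize, hnext]
  set r := (j + (p - 1) * s) % p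
  have hrp : r < p := Nat.mod_lt _ hp
  rcases Nat.lt_or_ge (r + 1) p with h | h
  · rw [Nat.mod_eq_of_lt h, ← add_assoc]
    exact hw _ (by omega) (by omega)
  · rw [show r + 1 = p by omega, Nat.mod_self, add_zero, show s + r = s + p - 1 by omega]
    exact hclose

end PseudoOrbits

section Chains

variable {X : Type*} [MetricSpace X] {T : X → X} {δ : ℝ}

theorem chain_zero (x : X) : Chain T δ 0 x x :=
  ⟨fun _ => x, rfl, rfl, fun _ _ hj => absurd hj (Nat.not_lt_zero _)⟩

theorem chain_one {x y : X} (h : dist (T x) y < δ) : Chain T δ 1 x y :=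
  ⟨fun j => if j = 0 then x else y, rfl, rfl, fun j _ hj => by
    obtain rfl : j = 0 := by omega
    simpa using h⟩

theorem chain_orbit (hδ : 0 < δ) (x : X) (n : ℕ) : Chain T δ n x (T^[n] x) :=
  ⟨_, rfl, rfl, isPseudoOrbitOn_orbit hδ x 0 n⟩

theorem Chain.trans {n m : ℕ} {x y z : X} (h₁ : Chain T δ n x y) (h₂ : Chain T δ m y z) :
    Chain T δ (n + m) x z := by
  obtain ⟨c₁, rfl, rfl, hc₁⟩ := h₁
  obtain ⟨c₂, hc₂, rfl, hc₂'⟩ := h₂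
  obtain ⟨w, hw, hw₁, hw₂⟩ := hc₁.splice (v := fun _ => c₂ m) (A := n + m) (e := n + m)
    (Nat.le_add_right n m) (by rwa [Nat.add_sub_cancel_left]) hc₂ (by simp)
    (fun _ hj hj' => absurd hj' (not_lt.2 hj))
  exact ⟨w, hw₁ 0 (Nat.zero_le _), hw₂ _ le_rfl, hw⟩

theorem Chain.repeat {n : ℕ} {y : X} (h : Chain T δ n y y) : ∀ a : ℕ, Chain T δ (a * n) y y
  | 0 => by simpa using chain_zero y
  | a + 1 => by simpa [add_mul] using (h.repeat a).trans h

theorem Chain.of_dist_lt {δ' : ℝ} {n : ℕ} {x v y : X} (h : Chain T δ n x v) (hn : n ≠ 0)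
    (hv : dist v y < δ' - δ) : Chain T δ' n x y := by
  obtain ⟨c, rfl, rfl, hc⟩ := h
  obtain ⟨m, rfl⟩ := Nat.exists_eq_succ_of_ne_zero hn
  have hδ : δ ≤ δ' := by linarith [dist_nonneg (x := c (m + 1)) (y := y)]
  refine Chain.trans (m := 1) ⟨c, rfl, rfl, hc.mono hδ le_rfl m.le_succ⟩ (chain_one ?_)
  linarith [dist_triangle (T (c m)) (c (m + 1)) y, hc m (Nat.zero_le _) m.lt_succ_self]

theorem exists_chains_same_length (hwm : TopTransitive (Prod.map T T)) (hδ : 0 < δ)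
    (x y x' y' : X) :
    ∃ n, 0 < n ∧ Chain T δ n x y ∧ Chain T δ n x' y' := by
  obtain ⟨n, hn, _, ⟨⟨u, u'⟩, ⟨hu, hu'⟩, rfl⟩, hy, hy'⟩ :=
    hwm (Metric.ball (T x) δ ×ˢ Metric.ball (T x') δ) (Metric.ball y δ ×ˢ Metric.ball y' δ)
      (Metric.isOpen_ball.prod Metric.isOpen_ball) (Metric.isOpen_ball.prod Metric.isOpen_ball)
      ⟨(T x, T x'), by simp [hδ]⟩ ⟨(y, y'), by simp [hδ]⟩
  simp only [Prod.map_iterate, Prod.map_fst, Prod.map_snd, Metric.mem_ball] at hu hu' hy hy'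
  -- a jump onto the orbit of `w`, `n - 1` exact steps along it, and a jump off it
  have via : ∀ {a b w : X}, dist w (T a) < δ → dist (T^[n] w) b < δ → Chain T δ (n + 1) a b := by
    intro a b w hw hwb
    have hstep : dist (T (T^[n - 1] w)) b < δ := by
      rwa [← iterate_succ_apply' T, Nat.succ_eq_add_one, Nat.sub_add_cancel hn]
    have h := ((chain_one (by rwa [dist_comm])).trans (chain_orbit hδ w (n - 1))).trans
      (chain_one hstep)
    rwa [show 1 + (n - 1) + 1 = n + 1 by omega] at h
  exact ⟨n + 1, n.succ_pos, via hu hy, via hu' hy'⟩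

theorem exists_chain_self_of_le (hwm : TopTransitive (Prod.map T T)) (hδ : 0 < δ) (y : X) :
    ∃ N, ∀ n, N ≤ n → Chain T δ n y y := by
  obtain ⟨m, -, h₁, h₂⟩ := exists_chains_same_length hwm hδ y y (T y) y
  have h₃ : Chain T δ (1 + m) y y := (chain_one (by simpa using hδ)).trans h₂
  -- loops of the coprime lengths `m` and `1 + m` combine to every large length
  refine ⟨m.pred * (1 + m).pred, fun n hn => ?_⟩
  obtain ⟨a, b, rfl⟩ :=
    Nat.exists_add_mul_eq_of_gcd_dvd_of_mul_pred_le m (1 + m) n (by simp) hn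
  exact (h₁.repeat a).trans (h₃.repeat b)

theorem exists_chain_of_le (hwm : TopTransitive (Prod.map T T)) (hδ : 0 < δ) (x y : X) :
    ∃ N, ∀ n, N ≤ n → Chain T δ n x y := by
  obtain ⟨n₀, -, h, -⟩ := exists_chains_same_length hwm hδ x y x y
  obtain ⟨N, hN⟩ := exists_chain_self_of_le hwm hδ y
  refine ⟨n₀ + N, fun n hn => ?_⟩
  simpa [show n₀ + (n - n₀) = n by omega] using h.trans (hN (n - n₀) (by omega))

theorem exists_chain_of_le_uniform [CompactSpace X] (hwm : TopTransitive (Prod.map T T))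
    (hδ : 0 < δ) : ∃ M, 0 < M ∧ ∀ x y n, M ≤ n → Chain T δ n x y := by
  obtain ⟨F, hF, hcover⟩ := Metric.totallyBounded_iff.1 (isCompact_univ (X := X)).totallyBounded
    (δ / 2) (half_pos hδ)
  choose N hN using exists_chain_of_le hwm (half_pos hδ)
  obtain ⟨K, hK⟩ := ((hF.prod hF).image fun q : X × X => N q.1 q.2).bddAbove
  refine ⟨K + 2, by omega, fun x y n hn => ?_⟩
  obtain ⟨u, hu, hxu⟩ := Set.mem_iUnion₂.1 (hcover (Set.mem_univ (T x)))
  obtain ⟨v, hv, hyv⟩ := Set.mem_iUnion₂.1 (hcover (Set.mem_univ y))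
  rw [Metric.mem_ball] at hxu hyv
  have hNuv : N u v ≤ K := hK ⟨(u, v), ⟨hu, hv⟩, rfl⟩
  have h := (chain_one (by linarith : dist (T x) u < δ)).trans
    ((hN u v (n - 1) (by omega)).of_dist_lt (δ' := δ) (y := y) (by omega)
      (by rw [dist_comm]; linarith))
  rwa [show 1 + (n - 1) = n by omega] at h

end Chains

section Segments

theorem monotone_endpoints_of_lt {ι : Type*} [PartialOrder ι] {a b : ι → ℕ}
    (hab : ∀ i, a i ≤ b i) (horder : ∀ i j, i < j → b i < a j) : Monotone a ∧ Monotone b := by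
  refine ⟨fun i j hij => ?_, fun i j hij => ?_⟩ <;> rcases hij.eq_or_lt with rfl | hlt
  · exact le_rfl
  · exact (hab i).trans (horder i j hlt).le
  · exact le_rfl
  · exact (horder i j hlt).le.trans (hab j)

variable {X : Type*} [MetricSpace X] {T : X → X} {δ : ℝ} {M n : ℕ}

theorem exists_pseudoOrbitOn_through_segments (hδ : 0 < δ)
    (hchain : ∀ x y m, M ≤ m → Chain T δ m x y) (x : Fin (n + 1) → X) (a b : Fin (n + 1) → ℕ)
    (hab : ∀ i, a i ≤ b i) (horder : ∀ i j, i < j → b i < a j)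
    (hgap : ∀ i : Fin n, b i.castSucc + M ≤ a i.succ) (i : Fin (n + 1)) :
    ∃ w, IsPseudoOrbitOn T δ w 0 (b i) ∧
      ∀ i' ≤ i, ∀ j, a i' ≤ j → j ≤ b i' → w j = T^[j] (x i') := by
  induction i using Fin.induction with
  | zero =>
    exact ⟨fun j => T^[j] (x 0), isPseudoOrbitOn_orbit hδ _ _ _,
      fun i' hi' _ _ _ => by rw [Fin.le_zero_iff.1 hi']⟩
  | succ i ih =>
    obtain ⟨w, hw, hseg⟩ := ih
    have hgapi := hgap i
    obtain ⟨c, hc₀, hcA, hc⟩ := hchain (T^[b i.castSucc] (x i.castSucc)) (T^[a i.succ] (x i.succ))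
      (a i.succ - b i.castSucc) (by omega)
    obtain ⟨w', hw', hw'u, hw'v⟩ := hw.splice (v := fun j => T^[j] (x i.succ)) (e := b i.succ)
      (by omega) hc (hc₀.trans (hseg _ le_rfl _ (hab _) le_rfl).symm) hcA
      (isPseudoOrbitOn_orbit hδ _ _ _)
    refine ⟨w', hw', fun i' hi' j hj hj' => ?_⟩
    rcases eq_or_ne i' i.succ with rfl | hne
    · exact hw'v j hj
    · have hi'i : i' ≤ i.castSucc := Fin.le_castSucc_iff.2 (lt_of_le_of_ne hi' hne)
      rw [hw'u j (hj'.trans ((monotone_endpoints_of_lt hab horder).2 hi'i)),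
        hseg i' hi'i j hj hj']

theorem exists_periodic_pseudoOrbit_through_segments (hδ : 0 < δ) (hM : 0 < M)
    (hchain : ∀ x y m, M ≤ m → Chain T δ m x y) (x : Fin (n + 1) → X) (a b : Fin (n + 1) → ℕ)
    (hab : ∀ i, a i ≤ b i) (horder : ∀ i j, i < j → b i < a j)
    (hgap : ∀ i : Fin n, b i.castSucc + M ≤ a i.succ) {p : ℕ}
    (hp : M + b (Fin.last n) - a 0 ≤ p) :
    ∃ ξ, Periodic ξ p ∧ IsPseudoOrbit T δ ξ ∧ ∀ i j, a i ≤ j → j ≤ b i → ξ j = T^[j] (x i) := by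
  obtain ⟨ha, hb⟩ := monotone_endpoints_of_lt hab horder
  have hab₀ : a 0 ≤ b (Fin.last n) := (hab 0).trans (hb (Fin.zero_le _))
  obtain ⟨w, hw, hseg⟩ :=
    exists_pseudoOrbitOn_through_segments hδ hchain x a b hab horder hgap (Fin.last n)
  obtain ⟨c, hc₀, hcA, hc⟩ := hchain (T^[b (Fin.last n)] (x (Fin.last n))) (T^[a 0] (x 0))
    (a 0 + p - b (Fin.last n)) (by omega)
  -- close the pseudo-orbit up at time `a 0 + p`, back at the point it had at time `a 0`
  obtain ⟨W, hW, hWw, hWend⟩ := hw.splice (v := fun _ => T^[a 0] (x 0)) (A := a 0 + p)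
    (e := a 0 + p) (by omega) hc (hc₀.trans (hseg _ le_rfl _ (hab _) le_rfl).symm) hcA
    (fun _ hj hj' => absurd hj' (not_lt.2 hj))
  have hWseg : ∀ i j, a i ≤ j → j ≤ b i → W j = T^[j] (x i) := fun i j hj hj' =>
    (hWw j (hj'.trans (hb (Fin.le_last i)))).trans (hseg i (Fin.le_last i) j hj hj')
  refine ⟨periodize W (a 0) p, periodize_periodic _ _ _,
    isPseudoOrbit_periodize (by omega) (hW.mono le_rfl (Nat.zero_le _) (by omega)) ?_,
    fun i j hj hj' => ?_⟩
  · have hlast := hW (a 0 + p - 1) (Nat.zero_le _) (by omega)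
    rwa [show a 0 + p - 1 + 1 = a 0 + p by omega, hWend _ le_rfl,
      ← hWseg 0 (a 0) le_rfl (hab 0)] at hlast
  · have := hb (Fin.le_last i)
    rw [periodize_of_le_of_lt ((ha (Fin.zero_le i)).trans hj) (by omega), hWseg i j hj hj']

end Segments

section Refinement

variable {X : Type*} [MetricSpace X] [CompactSpace X] {T : X → X} {δ : ℝ}

theorem exists_lt_dist_lt (f : ℕ → X) (hδ : 0 < δ) : ∃ m n, m < n ∧ dist (f n) (f m) < δ := by
  obtain ⟨_, φ, hφ, hlim⟩ := CompactSpace.tendsto_subseq f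
  obtain ⟨N, hN⟩ := Metric.cauchySeq_iff'.1 hlim.cauchySeq δ hδ
  exact ⟨φ N, φ (N + 1), hφ N.lt_succ_self, hN (N + 1) N.le_succ⟩

theorem exists_periodic_pseudoOrbit_of_orbit (hδ : 0 < δ) (z : X) {q : ℕ} (hq : 0 < q) :
    ∃ s p, 0 < p ∧ q ∣ s ∧ q ∣ p ∧ IsPseudoOrbit T δ (periodize (fun j => T^[j] z) s p) := by
  obtain ⟨m, n, hmn, hd⟩ := exists_lt_dist_lt (fun i => T^[i * q] z) hδ
  have hp : 0 < (n - m) * q := Nat.mul_pos (by omega) hq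
  refine ⟨m * q, (n - m) * q, hp, dvd_mul_left _ _, dvd_mul_left _ _,
    isPseudoOrbit_periodize hp (isPseudoOrbitOn_orbit hδ _ _ _) ?_⟩
  have hend : m * q + (n - m) * q - 1 + 1 = n * q := by
    rw [← Nat.add_mul, Nat.add_sub_cancel' hmn.le,
      Nat.sub_add_cancel (Nat.mul_pos (by omega) hq)]
  rwa [← iterate_succ_apply' T, Nat.succ_eq_add_one, hend]

theorem ShadowingProperty.exists_periodic_refinement (hsh : ShadowingProperty T) {t t' : ℝ}
    (ht' : 0 < t') {ξ : ℕ → X} {q : ℕ} (hq : 0 < q) (hξ : Periodic ξ q) {z : X}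
    (hz : ∀ j, dist (T^[j] z) (ξ j) < t) :
    ∃ ξ', (∃ q' > 0, Periodic ξ' q') ∧ (∃ z', ∀ j, dist (T^[j] z') (ξ' j) < t') ∧
      ∀ j, dist (ξ' j) (ξ j) < t := by
  obtain ⟨δ, hδ, hshadow⟩ := hsh t' ht'
  obtain ⟨s, p, hp, hs, hqp, hpo⟩ := exists_periodic_pseudoOrbit_of_orbit hδ z hq
  refine ⟨_, ⟨p, hp, periodize_periodic _ _ _⟩, hshadow _ hpo, fun j => ?_⟩
  rw [← periodize_eq_self hξ hs hqp]
  exact hz _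

end Refinement

section Limit

theorem exists_seq_of_step {α : Type*} {P : ℕ → α → Prop} {R : ℕ → α → α → Prop} {a₀ : α}
    (h₀ : P 0 a₀) (step : ∀ m a, P m a → ∃ b, P (m + 1) b ∧ R m a b) :
    ∃ f : ℕ → α, f 0 = a₀ ∧ ∀ m, P m (f m) ∧ R m (f m) (f (m + 1)) := by
  choose! g hg using step
  let f : ℕ → α := fun m => Nat.rec a₀ g m
  have hP : ∀ m, P m (f m) := fun m => by
    induction m with
    | zero => exact h₀
    | succ m ih => exact (hg m _ ih).1
  exact ⟨f, rfl, fun m => ⟨hP m, (hg m _ (hP m)).2⟩⟩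

variable {X : Type*} [MetricSpace X] {T : X → X}

theorem exists_orbit_dist_le_geometric [CompleteSpace X] (hT : Continuous T) {C : ℝ}
    {ξ : ℕ → ℕ → X} (hshadow : ∀ m, ∃ z, ∀ j, dist (T^[j] z) (ξ m j) ≤ C / 2 / 2 ^ m)
    (hstep : ∀ m j, dist (ξ m j) (ξ (m + 1) j) ≤ C / 2 / 2 ^ m) :
    ∃ z, ∀ m j, dist (T^[j] z) (ξ m j) ≤ C / 2 ^ m := by
  choose Z hZ using hshadow
  choose L hL using fun j =>
    cauchySeq_tendsto_of_complete (cauchySeq_of_le_geometric_two (hstep · j))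
  have hξL : ∀ m j, dist (ξ m j) (L j) ≤ C / 2 ^ m := fun m j =>
    dist_le_of_le_geometric_two_of_tendsto (hstep · j) (hL j) m
  have hgeom : Tendsto (fun m : ℕ => C / 2 ^ m) atTop (𝓝 0) := by
    simpa [div_eq_mul_inv, inv_pow] using
      (tendsto_pow_atTop_nhds_zero_of_lt_one (by norm_num : (0 : ℝ) ≤ 2⁻¹)
        (by norm_num)).const_mul C
  have hZL : ∀ j, Tendsto (fun m => T^[j] (Z m)) atTop (𝓝 (L j)) := fun j =>
    tendsto_iff_dist_tendsto_zero.2 <| squeeze_zero (fun _ => dist_nonneg)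
      (fun m => (dist_triangle _ _ _).trans (add_le_add (hZ m j) (hξL m j)))
      (by simpa [div_right_comm _ (2 : ℝ)] using (hgeom.div_const 2).add hgeom)
  -- the orbit of the limit point is the pointwise limit of the sequences `ξ m`
  have horbit : ∀ j, T^[j] (L 0) = L j := fun j =>
    tendsto_nhds_unique (((hT.iterate j).tendsto _).comp (hZL 0)) (hZL j)
  exact ⟨L 0, fun m j => by rw [horbit, dist_comm]; exact hξL m j⟩

theorem exists_isLimitPeriodic_orbit [CompactSpace X] (hT : Continuous T)
    (hsh : ShadowingProperty T) {t : ℝ} (ht : 0 < t) {ξ₀ : ℕ → X} {q₀ : ℕ} (hq₀ : 0 < q₀)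
    (hper : Periodic ξ₀ q₀) {z₀ : X} (hz₀ : ∀ j, dist (T^[j] z₀) (ξ₀ j) < t) :
    ∃ z, IsLimitPeriodic (fun j => T^[j] z) ∧ ∀ j, dist (T^[j] z) (ξ₀ j) ≤ 2 * t := by
  obtain ⟨ξ, rfl, hξ⟩ := exists_seq_of_step
    (P := fun m ξ => (∃ q > 0, Periodic ξ q) ∧ ∃ z, ∀ j, dist (T^[j] z) (ξ j) < t / 2 ^ m)
    (R := fun m ξ ξ' => ∀ j, dist (ξ' j) (ξ j) < t / 2 ^ m)
    ⟨⟨q₀, hq₀, hper⟩, z₀, by simpa using hz₀⟩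
    fun m _ ⟨⟨_, hq, hξ⟩, _, hz⟩ =>
      let ⟨ξ', hper', hz', hclose⟩ := hsh.exists_periodic_refinement (by positivity) hq hξ hz
      ⟨ξ', ⟨hper', hz'⟩, hclose⟩
  have hC : ∀ m : ℕ, 2 * t / 2 / 2 ^ m = t / 2 ^ m := fun m => by ring
  obtain ⟨z, hz⟩ := exists_orbit_dist_le_geometric (C := 2 * t) hT
    (fun m => (hξ m).1.2.imp fun _ h j => (hC m).symm ▸ (h j).le)
    (fun m j => (hC m).symm ▸ dist_comm (ξ (m + 1) j) (ξ m j) ▸ ((hξ m).2 j).le)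
  refine ⟨z, fun r hr => ?_, fun j => by simpa using hz 0 j⟩
  obtain ⟨m, hm⟩ : ∃ m : ℕ, 2 * t / 2 ^ m < r := by
    obtain ⟨m, hm⟩ := exists_pow_lt_of_lt_one (div_pos hr (by positivity : 0 < 2 * t))
      (by norm_num : (1 / 2 : ℝ) < 1)
    rw [one_div_pow, lt_div_iff₀ (by positivity)] at hm
    exact ⟨m, by rwa [div_mul_eq_mul_div, one_mul] at hm⟩
  obtain ⟨q, hq, hξq⟩ := (hξ m).1.1
  exact ⟨ξ m, q, hq, hξq, fun j => (hz m j).trans hm.le⟩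

end Limit

section Odometer

variable {X : Type*} [MetricSpace X] {T : X → X}

theorem IsLimitPeriodic.exists_period {u : ℕ → X} (hu : IsLimitPeriodic u) {r : ℝ}
    (hr : 0 < r) :
    ∃ q > 0, ∀ j n, dist (u (j + n * q)) (u j) ≤ r := by
  obtain ⟨ξ, q, hq, hξ, huξ⟩ := hu (r / 2) (half_pos hr)
  refine ⟨q, hq, fun j n => ?_⟩
  calc dist (u (j + n * q)) (u j)
      ≤ dist (u (j + n * q)) (ξ (j + n * q)) + dist (ξ j) (u j) := by
        rw [show ξ (j + n * q) = ξ j by simpa using hξ.nat_mul n j]; exact dist_triangle _ _ _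
    _ ≤ r / 2 + r / 2 := add_le_add (huξ _) (by rw [dist_comm]; exact huξ j)
    _ = r := add_halves r

theorem dist_iterate_add_le_of_mem_orbitClosure (hT : Continuous T) {z : X} {q : ℕ} {r : ℝ}
    (hz : ∀ j n, dist (T^[j + n * q] z) (T^[j] z) ≤ r) {y : X} (hy : y ∈ orbitClosure T z)
    (j n : ℕ) : dist (T^[j + n * q] y) (T^[j] y) ≤ r := by
  refine closure_minimal (s := Set.range fun i => T^[i] z) ?_
    (isClosed_le ((hT.iterate _).dist (hT.iterate _)) continuous_const) hy
  rintro _ ⟨i, rfl⟩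
  simpa only [Set.mem_ofPred_eq, ← iterate_add_apply, Nat.add_right_comm j (n * q) i]
    using hz (j + i) n

theorem mapsTo_orbitClosure (hT : Continuous T) (z : X) :
    Set.MapsTo T (orbitClosure T z) (orbitClosure T z) := by
  refine Set.MapsTo.closure ?_ hT
  rintro _ ⟨n, rfl⟩
  exact ⟨n + 1, iterate_succ_apply' T n z⟩

theorem equicontinuous_iterate_restrict_orbitClosure (hT : Continuous T) {z : X}
    (hz : IsLimitPeriodic fun n => T^[n] z) :
    Equicontinuous fun n => ((mapsTo_orbitClosure hT z).restrict T _ _)^[n] := by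
  intro y₀
  rw [Metric.equicontinuousAt_iff_right]
  intro r hr
  obtain ⟨q, hq, hzq⟩ := hz.exists_period (r := r / 3) (by positivity)
  have hnear : ∀ᶠ y : orbitClosure T z in 𝓝 y₀,
      ∀ i ∈ Set.Iio q, dist (T^[i] (y : X)) (T^[i] y₀) < r / 3 :=
    (Filter.eventually_all_finite (Set.finite_Iio q)).2 fun i _ =>
      Metric.tendsto_nhds.1 (((hT.iterate i).comp continuous_subtype_val).tendsto y₀) _
        (by positivity)
  filter_upwards [hnear] with y hy i
  simp only [Subtype.dist_eq, Set.MapsTo.coe_iterate_restrict]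
  -- every iterate is within `r / 3` of one of the first `q` iterates
  have hsplit := Nat.mod_add_div' i q
  have h₀ := dist_iterate_add_le_of_mem_orbitClosure hT hzq y₀.2 (i % q) (i / q)
  have h₁ := dist_iterate_add_le_of_mem_orbitClosure hT hzq y.2 (i % q) (i / q)
  rw [hsplit] at h₀ h₁
  have h₂ := hy (i % q) (Nat.mod_lt i hq)
  rw [dist_comm] at h₁ h₂
  linarith [dist_triangle4 (T^[i] (y₀ : X)) (T^[i % q] y₀) (T^[i % q] y) (T^[i] y)]

theorem isOdometer_orbitClosure (hT : Continuous T) {z : X}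
    (hz : IsLimitPeriodic fun n => T^[n] z) :
    ∃ h : Set.MapsTo T (orbitClosure T z) (orbitClosure T z), IsOdometer (h.restrict T _ _) := by
  refine ⟨mapsTo_orbitClosure hT z, equicontinuous_iterate_restrict_orbitClosure hT hz,
    ⟨z, subset_closure ⟨0, rfl⟩⟩, fun U hU => ?_, ?_⟩
  · obtain ⟨r, hr, hball⟩ := Metric.mem_nhds_iff.1 hU
    obtain ⟨q, hq, hzq⟩ := hz.exists_period (half_pos hr)
    refine ⟨q, hq, fun n => hball ?_⟩
    rw [Metric.mem_ball, Subtype.dist_eq, Set.MapsTo.coe_iterate_restrict, mul_comm]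
    simpa using (hzq 0 n).trans_lt (half_lt_self hr)
  · rw [Subtype.dense_iff, ← Set.range_comp]
    simp only [comp_def, Set.MapsTo.coe_iterate_restrict]
    exact subset_rfl

end Odometer

theorem stmt13 {X : Type*} [MetricSpace X] [CompactSpace X]
    (T : X → X) (hT : Continuous T)
    (hwm : TopTransitive (Prod.map T T)) (hsh : ShadowingProperty T)
    (ε : ℝ) (hε : 0 < ε) :
    ∃ M : ℕ, 0 < M ∧ ∀ (k : ℕ) (hk : 2 ≤ k) (x : Fin k → X) (a b : Fin k → ℕ),
      (∀ i, a i ≤ b i) → (∀ i j : Fin k, i < j → b i < a j) →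
      (∀ i j : Fin k, (i : ℕ) + 1 = (j : ℕ) → b i + M ≤ a j) →
      ∀ p : ℕ, M + b ⟨k - 1, by omega⟩ - a ⟨0, by omega⟩ ≤ p →
      ∃ z : X,
        (∃ h : Set.MapsTo T (orbitClosure T z) (orbitClosure T z),
          IsOdometer (Set.MapsTo.restrict T _ _ h)) ∧
        (∀ n j : ℕ, dist (T^[j] z) (T^[n * p + j] z) < ε) ∧
        (∀ i : Fin k, ∀ j : ℕ, a i ≤ j → j ≤ b i → ∀ n : ℕ,
          dist (T^[n * p + j] z) (T^[j] (x i)) < ε) := by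
  obtain ⟨δ, hδ, hshadow⟩ := hsh (ε / 8) (by positivity)
  obtain ⟨M, hM, hchain⟩ := exists_chain_of_le_uniform hwm hδ
  refine ⟨M, hM, fun k hk x a b hab horder hgap p hp => ?_⟩
  obtain ⟨m, rfl⟩ : ∃ m, k = m + 1 := ⟨k - 1, by omega⟩
  have hp' : M + b (Fin.last m) - a 0 ≤ p := by simpa [Fin.last] using hp
  have hp₀ : 0 < p := by
    have := (hab 0).trans ((monotone_endpoints_of_lt hab horder).2 (Fin.zero_le (Fin.last m)))
    omega
  obtain ⟨ξ₀, hper, hpo, hseg⟩ := exists_periodic_pseudoOrbit_through_segments hδ hM hchain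
    x a b hab horder (fun i => hgap _ _ (by simp)) hp'
  obtain ⟨z₀, hz₀⟩ := hshadow ξ₀ hpo
  obtain ⟨z, hlim, hz⟩ := exists_isLimitPeriodic_orbit hT hsh (by positivity) hp₀ hper hz₀
  have hξ₀ : ∀ n j, ξ₀ (n * p + j) = ξ₀ j := fun n j => by
    simpa [add_comm] using hper.nat_mul n j
  refine ⟨z, isOdometer_orbitClosure hT hlim, fun n j => ?_, fun i j hj hj' n => ?_⟩
  · calc dist (T^[j] z) (T^[n * p + j] z)
        ≤ dist (T^[j] z) (ξ₀ j) + dist (ξ₀ (n * p + j)) (T^[n * p + j] z) := by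
          rw [hξ₀]; exact dist_triangle _ _ _
      _ ≤ 2 * (ε / 8) + 2 * (ε / 8) := add_le_add (hz j) (by rw [dist_comm]; exact hz _)
      _ < ε := by linarith
  · calc dist (T^[n * p + j] z) (T^[j] (x i)) = dist (T^[n * p + j] z) (ξ₀ (n * p + j)) := by
          rw [hξ₀, hseg i j hj hj']
      _ ≤ 2 * (ε / 8) := hz _
      _ < ε := by linarith
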